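/- Define the Markoff value of the doubly-periodic sequence ᪲(32)᪲ as [(23)^∞] + [(32)^∞], where [(32)^∞] is the fixed point of N₃N₂ and [(23)^∞] is the fixed point of N₂N₃. Then [(32)^∞] + [(23)^∞] = √10. -/
import Mathlib


/-- The action of a matrix on `ℝ` as a fractional linear transformation. -/
noncomputable def mob (M : Matrix (Fin 2) (Fin 2) ℝ) (t : ℝ) : ℝ :=
  (M 0 0 * t + M 0 1) / (M 1 0 * t + M 1 1)

noncomputable def N₂ : Matrix (Fin 2) (Fin 2) ℝ := !![1, Real.sqrt 2; Real.sqrt 2, 1]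
noncomputable def N₃ : Matrix (Fin 2) (Fin 2) ℝ := !![1, Real.sqrt 2; 0, 1]

/-- `[(32)^∞] + [(23)^∞] = √10`. -/
theorem markoff_value_32 (a b : ℝ)
    (ha : a ∈ Set.Ici (Real.sqrt 2)) (hfa : mob (N₃ * N₂) a = a)
    (hb : b ∈ Set.Icc (1 / Real.sqrt 2) (Real.sqrt 2)) (hfb : mob (N₂ * N₃) b = b) :
    a + b = Real.sqrt 10 := by
  have hs2 : Real.sqrt 2 ^ 2 = 2 := Real.sq_sqrt (by norm_num)
  have hs2pos : (0:ℝ) < Real.sqrt 2 := Real.sqrt_pos.mpr (by norm_num)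
  have ha' : Real.sqrt 2 ≤ a := ha
  have hb' : 0 < b := lt_of_lt_of_le (by positivity) hb.1
  have hapos : 0 < a := lt_of_lt_of_le hs2pos ha'
  simp only [mob, N₂, N₃, Matrix.mul_apply, Fin.sum_univ_two] at hfa hfb
  norm_num [Matrix.cons_val', Matrix.cons_val_zero, Matrix.cons_val_one, Matrix.head_cons,
    Matrix.empty_val', Matrix.cons_val_fin_one, Matrix.head_fin_const] at hfa hfb
  rw [div_eq_iff (by positivity : Real.sqrt 2 * a + 1 ≠ 0)] at hfa
  rw [div_eq_iff (by positivity : Real.sqrt 2 * b + 3 ≠ 0)] at hfb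
  have hss : Real.sqrt 2 * Real.sqrt 2 = 2 := Real.mul_self_sqrt (by norm_num)
  have hqa : a ^ 2 = Real.sqrt 2 * a + 2 := by nlinarith [hfa, hss]
  have hqb : b ^ 2 = 2 - Real.sqrt 2 * b := by nlinarith [hfb, hss]
  have h1 : (2 * a - Real.sqrt 2) ^ 2 = 10 := by nlinarith
  have h2 : (2 * b + Real.sqrt 2) ^ 2 = 10 := by nlinarith
  have h1' : 2 * a - Real.sqrt 2 = Real.sqrt 10 := by
    rw [show (10:ℝ) = (2*a - Real.sqrt 2)^2 from h1.symm]
    exact (Real.sqrt_sq (by nlinarith)).symm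
  have h2' : 2 * b + Real.sqrt 2 = Real.sqrt 10 := by
    rw [show (10:ℝ) = (2*b + Real.sqrt 2)^2 from h2.symm]
    exact (Real.sqrt_sq (by nlinarith)).symm
  linarith
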